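/- arXiv:math/0703703 — 5 statements merged into one kernel-verified Lean document; each statement's English description precedes it below -/
import Mathlib

section
/- Let p be a prime and let G be a group. For all integers m, n ≥ 1, the commutator subgroup [γ_m^p G, γ_n^p G] is contained in γ_{m+n}^p G. -/
/-! Common definitions following the paper "Residual p properties of mapping class groups
and surface groups" by L. Paris. -/

/-- The commutator `[g,h] = g⁻¹h⁻¹gh`. -/
def commAB {G : Type*} [Group G] (g h : G) : G := g⁻¹ * h⁻¹ * g * h

/-- The commutator subgroup `[K,H]`, generated by all `[g,h]` with `g ∈ K`, `h ∈ H`. -/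
def commSub {G : Type*} [Group G] (K H : Subgroup G) : Subgroup G :=
  Subgroup.closure {x | ∃ g ∈ K, ∃ h ∈ H, x = commAB g h}

/-- The subgroup `[K,H]^p`, generated by all `[g,h]` (`g ∈ K`, `h ∈ H`) together with all
`h^p` (`h ∈ H`). -/
def pComm (p : ℕ) {G : Type*} [Group G] (K H : Subgroup G) : Subgroup G :=
  Subgroup.closure ({x | ∃ g ∈ K, ∃ h ∈ H, x = commAB g h} ∪ {x | ∃ h ∈ H, x = h ^ p})

/-- The lower `𝔽_p`-linear central filtration: `γ_1^p G = G` and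
`γ_{n+1}^p G = [G, γ_n^p G]^p` (with the harmless convention `γ_0^p G = G`). -/
def gammaP (p : ℕ) (G : Type*) [Group G] : ℕ → Subgroup G
  | 0 => ⊤
  | 1 => ⊤
  | n + 2 => pComm p ⊤ (gammaP p G (n + 1))

theorem pComm_top_normal (p : ℕ) {G : Type*} [Group G] {H : Subgroup G} (hH : H.Normal) :
    (pComm p ⊤ H).Normal := by
  constructor
  intro x hx g
  unfold pComm at hx ⊢
  induction hx using Subgroup.closure_induction with
  | mem y hy =>
    apply Subgroup.subset_closure
    rcases hy with ⟨a, -, h, hh, rfl⟩ | ⟨h, hh, rfl⟩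
    · exact Or.inl ⟨g * a * g⁻¹, trivial, g * h * g⁻¹, hH.conj_mem h hh g,
        by unfold commAB; group⟩
    · exact Or.inr ⟨g * h * g⁻¹, hH.conj_mem h hh g, (conj_pow).symm⟩
  | one => simpa using Subgroup.one_mem _
  | mul a b ha hb iha ihb =>
    have e : g * (a * b) * g⁻¹ = (g * a * g⁻¹) * (g * b * g⁻¹) := by group
    rw [e]; exact Subgroup.mul_mem _ iha ihb
  | inv a ha iha =>
    have e : g * a⁻¹ * g⁻¹ = (g * a * g⁻¹)⁻¹ := by group
    rw [e]; exact Subgroup.inv_mem _ iha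

instance gammaP_normal (p : ℕ) (G : Type*) [Group G] : ∀ n, (gammaP p G n).Normal
  | 0 => by unfold gammaP; infer_instance
  | 1 => by unfold gammaP; infer_instance
  | n + 2 => by unfold gammaP; exact pComm_top_normal p (gammaP_normal p G (n + 1))

/-- `G` is residually `p`: every nontrivial element survives in some finite `p`-group
quotient. -/
def IsResiduallyP (p : ℕ) (G : Type*) [Group G] : Prop :=
  ∀ g : G, g ≠ 1 → ∃ (P : Type) (_ : Group P) (_ : Finite P) (φ : G →* P),
    IsPGroup p P ∧ Function.Surjective φ ∧ φ g ≠ 1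

/-- `G` is conjugacy `p`-separable. -/
def IsConjPSeparable (p : ℕ) (G : Type*) [Group G] : Prop :=
  ∀ g h : G, IsConj g h ∨ ∃ (P : Type) (_ : Group P) (_ : Finite P) (φ : G →* P),
    IsPGroup p P ∧ Function.Surjective φ ∧ ¬ IsConj (φ g) (φ h)

/-- Property A: every automorphism of `G` preserving every conjugacy class is inner. -/
def PropertyA (G : Type*) [Group G] : Prop :=
  ∀ α : MulAut G, (∀ g : G, IsConj g (α g)) → α ∈ (MulAut.conj : G →* MulAut G).range

/-- `A_n`: the kernel of the natural homomorphism `Aut(G) → Aut(G/γ_{n+1}^p G)`, i.e. the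
automorphisms acting trivially modulo `γ_{n+1}^p G`. -/
def An (p : ℕ) (G : Type*) [Group G] (n : ℕ) : Subgroup (MulAut G) where
  carrier := {α | ∀ g : G, g⁻¹ * α g ∈ gammaP p G (n + 1)}
  one_mem' := by intro g; simpa using Subgroup.one_mem _
  mul_mem' := by
    intro a b ha hb g
    have e : g⁻¹ * (a * b) g = (g⁻¹ * b g) * ((b g)⁻¹ * a (b g)) := by
      rw [MulAut.mul_apply]; group
    rw [e]; exact Subgroup.mul_mem _ (hb g) (ha (b g))
  inv_mem' := by
    intro a ha g
    have h := ha ((a⁻¹ : MulAut G) g)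
    rw [MulAut.apply_inv_self] at h
    have e : g⁻¹ * (a⁻¹ : MulAut G) g = (((a⁻¹ : MulAut G) g)⁻¹ * g)⁻¹ := by group
    rw [e]; exact Subgroup.inv_mem _ h

theorem mem_An {p : ℕ} {G : Type*} [Group G] {n : ℕ} {α : MulAut G} :
    α ∈ An p G n ↔ ∀ g : G, g⁻¹ * α g ∈ gammaP p G (n + 1) := Iff.rfl

/-- `I_p(G)`: the kernel of the natural homomorphism `Aut(G) → Aut(G/γ_2^p G)`. -/
abbrev Ip (p : ℕ) (G : Type*) [Group G] : Subgroup (MulAut G) := An p G 1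

/-- `Inn(G)`, viewed as a subgroup of `I_p(G)`. -/
def InnSub (p : ℕ) (G : Type*) [Group G] : Subgroup (Ip p G) :=
  Subgroup.comap (Ip p G).subtype (MulAut.conj : G →* MulAut G).range

instance innSub_normal (p : ℕ) (G : Type*) [Group G] : (InnSub p G).Normal := by
  constructor
  rintro n hn g
  obtain ⟨x, hx⟩ := hn
  refine ⟨(g : MulAut G) x, ?_⟩
  have hx' : MulAut.conj x = (n : MulAut G) := hx
  show MulAut.conj ((g : MulAut G) x) = ((g * n * g⁻¹ : Ip p G) : MulAut G)
  ext y
  simp only [Subgroup.coe_mul, Subgroup.coe_inv, MulAut.mul_apply, MulAut.conj_apply, ← hx',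
    map_mul, map_inv, MulAut.apply_inv_self]

/-- The surface relator `[x_1,y_1][x_2,y_2]⋯[x_ρ,y_ρ]` in the free group on
`x_1, …, x_ρ, y_1, …, y_ρ`. -/
def surfaceRel (ρ : ℕ) : FreeGroup (Fin ρ ⊕ Fin ρ) :=
  (List.ofFn fun i : Fin ρ =>
    commAB (FreeGroup.of (Sum.inl i)) (FreeGroup.of (Sum.inr i))).prod

/-- The fundamental group of the closed oriented surface of genus `ρ`, given by the
presentation `⟨x_1, …, x_ρ, y_1, …, y_ρ | [x_1,y_1]⋯[x_ρ,y_ρ] = 1⟩`. -/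
abbrev SurfaceGroup (ρ : ℕ) : Type :=
  PresentedGroup ({surfaceRel ρ} : Set (FreeGroup (Fin ρ ⊕ Fin ρ)))

/-! By induction on `m`, show `⁅γ_{m+1}, γ_{n+1}⁆ ≤ γ_{m+n+2}` for all `n` at once; the case
`m = 0` is the definition of `γ_{n+2}`. Modulo the normal subgroup `N = γ_{m+n+3}`, the elements
commuting with `γ_{n+1}` form a subgroup, so it suffices to check the generators of `γ_{m+2}`.
For a commutator `⁅g, a⁆` with `a ∈ γ_{m+1}` this is the three subgroups lemma modulo `N`, both
rotated commutators being controlled by the induction hypothesis. For a power `a ^ p`, the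
commutator `c = ⁅a, h⁆` lies in `γ_{m+n+2}` and is therefore central modulo `N`, whence
`⁅a ^ p, h⁆ ≡ c ^ p ≡ 1` modulo `N`. -/

open scoped commutatorElement
open Subgroup

section Commutators

variable {G : Type*} [Group G]

theorem Commute.commutatorElement_pow_left {a b : G} (hc : Commute a ⁅a, b⁆) (k : ℕ) :
    ⁅a ^ k, b⁆ = ⁅a, b⁆ ^ k := by
  induction k with
  | zero => simp
  | succ k ih =>
    rw [pow_succ', commutatorElement_mul_left_eq_conj_mul, ih, (hc.pow_right k).eq,
      mul_inv_cancel_right, pow_succ]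

theorem commutatorElement_pow_left_mem {N : Subgroup G} [N.Normal] {a b : G} {k : ℕ}
    (hc : ⁅a, ⁅a, b⁆⁆ ∈ N) (hk : ⁅a, b⁆ ^ k ∈ N) : ⁅a ^ k, b⁆ ∈ N := by
  rw [← QuotientGroup.ker_mk' N, MonoidHom.mem_ker] at hc hk ⊢
  simp only [map_commutatorElement, map_pow] at hc hk ⊢
  rwa [(commutatorElement_eq_one_iff_commute.1 hc).commutatorElement_pow_left]

theorem mem_comap_centralizer_map_iff {N H : Subgroup G} [N.Normal] {k : G} :
    k ∈ (centralizer (H.map (QuotientGroup.mk' N) : Set (G ⧸ N))).comap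
        (QuotientGroup.mk' N) ↔ ∀ h ∈ H, ⁅k, h⁆ ∈ N := by
  simp only [mem_comap, mem_centralizer_iff, coe_map, Set.forall_mem_image]
  refine forall₂_congr fun h _ => ?_
  rw [← QuotientGroup.eq_one_iff, eq_comm, ← commutatorElement_eq_one_iff_mul_comm]
  rfl

theorem commutator_commutator_le_of_rotate {N H₁ H₂ H₃ : Subgroup G} [N.Normal]
    (h1 : ⁅⁅H₂, H₃⁆, H₁⁆ ≤ N) (h2 : ⁅⁅H₃, H₁⁆, H₂⁆ ≤ N) : ⁅⁅H₁, H₂⁆, H₃⁆ ≤ N := by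
  have hmap (A B C : Subgroup G) : ⁅⁅A, B⁆, C⁆ ≤ N ↔
      ⁅⁅A.map (QuotientGroup.mk' N), B.map (QuotientGroup.mk' N)⁆,
        C.map (QuotientGroup.mk' N)⁆ = ⊥ := by
    rw [← map_commutator, ← map_commutator, Subgroup.map_eq_bot_iff, QuotientGroup.ker_mk']
  rw [hmap] at h1 h2 ⊢
  exact commutator_commutator_eq_bot_of_rotate h1 h2

theorem commAB_eq_commutatorElement (g h : G) : commAB g h = ⁅g⁻¹, h⁻¹⁆ := by
  simp [commAB, commutatorElement_def]

theorem commSub_eq_commutator (K H : Subgroup G) : commSub K H = ⁅K, H⁆ := by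
  refine le_antisymm ((closure_le _).2 ?_) (commutator_le.2 fun g hg h hh => subset_closure ?_)
  · rintro _ ⟨g, hg, h, hh, rfl⟩
    rw [commAB_eq_commutatorElement]
    exact commutator_mem_commutator (inv_mem hg) (inv_mem hh)
  · refine ⟨g⁻¹, inv_mem hg, h⁻¹, inv_mem hh, ?_⟩
    rw [commAB_eq_commutatorElement, inv_inv, inv_inv]

theorem pComm_le_iff {p : ℕ} {K H N : Subgroup G} :
    pComm p K H ≤ N ↔ ⁅K, H⁆ ≤ N ∧ ∀ h ∈ H, h ^ p ∈ N := by
  rw [pComm, Subgroup.closure_union, sup_le_iff]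
  change commSub K H ≤ N ∧ _ ↔ _
  rw [commSub_eq_commutator, closure_le]
  exact and_congr_right' ⟨fun hs h hh => hs ⟨h, hh, rfl⟩, fun hs _ ⟨h, hh, e⟩ => e ▸ hs h hh⟩

end Commutators

section GammaP

variable (p : ℕ) {G : Type*} [Group G]

theorem gammaP_add_two_le_iff {n : ℕ} {N : Subgroup G} :
    gammaP p G (n + 2) ≤ N ↔
      ⁅(⊤ : Subgroup G), gammaP p G (n + 1)⁆ ≤ N ∧ ∀ h ∈ gammaP p G (n + 1), h ^ p ∈ N :=
  pComm_le_iff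

variable (G) in
theorem commutator_top_gammaP_le (n : ℕ) :
    ⁅(⊤ : Subgroup G), gammaP p G (n + 1)⁆ ≤ gammaP p G (n + 2) :=
  ((gammaP_add_two_le_iff p).1 le_rfl).1

theorem pow_mem_gammaP_add_two {n : ℕ} {h : G} (hh : h ∈ gammaP p G (n + 1)) :
    h ^ p ∈ gammaP p G (n + 2) :=
  ((gammaP_add_two_le_iff p).1 le_rfl).2 h hh

variable (G) in
theorem commutator_gammaP_le (m n : ℕ) :
    ⁅gammaP p G (m + 1), gammaP p G (n + 1)⁆ ≤ gammaP p G (m + n + 2) := by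
  induction m generalizing n with
  | zero =>
    simp only [Nat.zero_add]
    exact commutator_top_gammaP_le p G n
  | succ m ih =>
    rw [Nat.add_right_comm m 1 n]
    set N := gammaP p G (m + n + 1 + 2)
    set C := (centralizer ((gammaP p G (n + 1)).map (QuotientGroup.mk' N) : Set (G ⧸ N))).comap
      (QuotientGroup.mk' N)
    suffices gammaP p G (m + 2) ≤ C from
      commutator_le.2 fun k hk => mem_comap_centralizer_map_iff.1 (this hk)
    refine (gammaP_add_two_le_iff p).2 ⟨fun k hk => mem_comap_centralizer_map_iff.2 ?_, ?_⟩
    · have hthree : ⁅⁅(⊤ : Subgroup G), gammaP p G (m + 1)⁆, gammaP p G (n + 1)⁆ ≤ N := by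
        refine commutator_commutator_le_of_rotate ?_ ?_
        · calc ⁅⁅gammaP p G (m + 1), gammaP p G (n + 1)⁆, ⊤⁆
              ≤ ⁅(⊤ : Subgroup G), gammaP p G (m + n + 2)⁆ := by
                rw [commutator_comm]; exact commutator_mono le_rfl (ih n)
            _ ≤ N := commutator_top_gammaP_le p G _
        · calc ⁅⁅gammaP p G (n + 1), ⊤⁆, gammaP p G (m + 1)⁆
              ≤ ⁅gammaP p G (m + 1), gammaP p G (n + 2)⁆ := by
                rw [commutator_comm, commutator_comm _ ⊤]
                exact commutator_mono le_rfl (commutator_top_gammaP_le p G n)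
            _ ≤ N := ih (n + 1)
      exact fun h hh => hthree (commutator_mem_commutator hk hh)
    · intro a ha
      refine mem_comap_centralizer_map_iff.2 fun h hh => ?_
      have hc : ⁅a, h⁆ ∈ gammaP p G (m + n + 2) := ih n (commutator_mem_commutator ha hh)
      exact commutatorElement_pow_left_mem
        (commutator_top_gammaP_le p G _ (commutator_mem_commutator (mem_top a) hc))
        (pow_mem_gammaP_add_two p hc)

end GammaP

theorem gammaP_commSub_le_general (p : ℕ) (G : Type*) [Group G] (m n : ℕ)
    (hm : 1 ≤ m) (hn : 1 ≤ n) :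
    commSub (gammaP p G m) (gammaP p G n) ≤ gammaP p G (m + n) := by
  obtain ⟨m, rfl⟩ := Nat.exists_eq_add_of_le' hm
  obtain ⟨n, rfl⟩ := Nat.exists_eq_add_of_le' hn
  rw [commSub_eq_commutator, show m + 1 + (n + 1) = m + n + 2 by omega]
  exact commutator_gammaP_le p G m n

/-- **Lemma 2.1.** For all `m, n ≥ 1`, `[γ_m^p G, γ_n^p G] ⊆ γ_{m+n}^p G`. -/
theorem gammaP_commSub_le (p : ℕ) (hp : p.Prime) (G : Type*) [Group G] (m n : ℕ)
    (hm : 1 ≤ m) (hn : 1 ≤ n) :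
    commSub (gammaP p G m) (gammaP p G n) ≤ gammaP p G (m + n) :=
  gammaP_commSub_le_general p G m n hm hn
end

section
/- Let p be a prime and let G be a finitely generated group. Then G is residually p if and only if ⋂_{n=1}^∞ γ_n^p G = {1}, i.e. the lower 𝔽_p-linear central filtration of G is a separating filtration. -/
/-! A homomorphism onto a finite `p`-group `P` carries `γ_n^p G` onto `γ_n^p P`, and the latter
vanishes for large `n`: quotienting `P` by a central subgroup of order `p` and inducting on `|P|`
puts `γ_n^p P` inside that subgroup, which `[P, -]^p` kills. Conversely, for finitely generated `G`
each `G / γ_n^p G` is a finite `p`-group: `γ_n^p G` has finite index, so it is finitely generated,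
and its image in `G / γ_{n+1}^p G` is a finitely generated central subgroup of exponent `p`,
hence finite. -/

section Filtration

variable {p : ℕ} {G : Type*} [Group G]

theorem commAB_eq_one_iff {g h : G} : commAB g h = 1 ↔ Commute g h := by
  rw [commAB, mul_assoc, mul_assoc, inv_mul_eq_one, eq_inv_mul_iff_mul_eq, eq_comm]
  rfl

theorem pComm_top_le_self {H : Subgroup G} (hH : H.Normal) : pComm p ⊤ H ≤ H := by
  rw [pComm, Subgroup.closure_le]
  rintro x (⟨g, -, h, hh, rfl⟩ | ⟨h, hh, rfl⟩)
  · have e : commAB g h = (g⁻¹ * h⁻¹ * g⁻¹⁻¹) * h := by simp [commAB]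
    rw [SetLike.mem_coe, e]
    exact H.mul_mem (hH.conj_mem _ (H.inv_mem hh) g⁻¹) hh
  · exact H.pow_mem hh p

theorem pComm_top_eq_bot_iff {Z : Subgroup G} :
    pComm p ⊤ Z = ⊥ ↔ Z ≤ Subgroup.center G ∧ ∀ z ∈ Z, z ^ p = 1 := by
  rw [pComm, Subgroup.closure_eq_bot_iff, Set.union_subset_iff]
  constructor
  · rintro ⟨hcomm, hpow⟩
    exact ⟨fun z hz => Subgroup.mem_center_iff.mpr fun g =>
      commAB_eq_one_iff.mp (hcomm ⟨g, trivial, z, hz, rfl⟩), fun z hz => hpow ⟨z, hz, rfl⟩⟩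
  · rintro ⟨hcen, hexp⟩
    constructor
    · rintro - ⟨g, -, z, hz, rfl⟩
      exact commAB_eq_one_iff.mpr (Subgroup.mem_center_iff.mp (hcen hz) g)
    · rintro - ⟨z, hz, rfl⟩
      exact hexp z hz

instance normal_pComm_top {H : Subgroup G} [hH : H.Normal] : (pComm p ⊤ H).Normal :=
  pComm_top_normal p hH

theorem map_pComm_top {P : Type*} [Group P] {φ : G →* P} (hφ : Function.Surjective φ)
    (H : Subgroup G) : (pComm p ⊤ H).map φ = pComm p ⊤ (H.map φ) := by
  rw [pComm, pComm, MonoidHom.map_closure]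
  congr 1
  ext x
  constructor
  · rintro ⟨y, ⟨g, -, h, hh, rfl⟩ | ⟨h, hh, rfl⟩, rfl⟩
    · exact Or.inl ⟨φ g, trivial, φ h, ⟨h, hh, rfl⟩, by simp [commAB]⟩
    · exact Or.inr ⟨φ h, ⟨h, hh, rfl⟩, map_pow φ h p⟩
  · rintro (⟨g, -, -, ⟨h, hh, rfl⟩, rfl⟩ | ⟨-, ⟨h, hh, rfl⟩, rfl⟩)
    · obtain ⟨g, rfl⟩ := hφ g
      exact ⟨commAB g h, Or.inl ⟨g, trivial, h, hh, rfl⟩, by simp [commAB]⟩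
    · exact ⟨h ^ p, Or.inr ⟨h, hh, rfl⟩, map_pow φ h p⟩

theorem map_gammaP {P : Type*} [Group P] {φ : G →* P} (hφ : Function.Surjective φ) :
    ∀ n, (gammaP p G n).map φ = gammaP p P n
  | 0 | 1 => Subgroup.map_top_of_surjective φ hφ
  | n + 2 => by rw [gammaP, map_pComm_top hφ, map_gammaP hφ (n + 1), gammaP]

end Filtration

theorem Subgroup.normal_of_le_center {G : Type*} [Group G] {Z : Subgroup G}
    (hZ : Z ≤ Subgroup.center G) : Z.Normal :=
  ⟨fun z hz g => by rwa [Subgroup.mem_center_iff.mp (hZ hz) g, mul_inv_cancel_right]⟩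

theorem IsPGroup.exists_gammaP_eq_bot {p : ℕ} (hp : p.Prime) {P : Type*} [Group P] [Finite P]
    (hP : IsPGroup p P) : ∃ n, gammaP p P (n + 1) = ⊥ := by
  induction hcard : Nat.card P using Nat.strong_induction_on generalizing P with
  | _ k ih =>
  rcases subsingleton_or_nontrivial P with hP1 | hP1
  · exact ⟨0, Subsingleton.elim _ _⟩
  have : Fact p.Prime := ⟨hp⟩
  obtain ⟨z, hz, hzp⟩ : ∃ z ∈ Subgroup.center P, orderOf z = p := by
    have hC := hP.to_subgroup (Subgroup.center P)
    obtain ⟨m, hm, hcard⟩ := hC.nontrivial_iff_card.mp hP.center_nontrivial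
    obtain ⟨z, hzp⟩ := exists_prime_orderOf_dvd_card' p (hcard ▸ dvd_pow_self p hm.ne')
    exact ⟨z, z.2, by rwa [Subgroup.orderOf_coe]⟩
  set Z := Subgroup.zpowers z
  have hZ : Z ≤ Subgroup.center P := Subgroup.zpowers_le.mpr hz
  have hZexp : ∀ x ∈ Z, x ^ p = 1 := by
    rintro - ⟨j, rfl⟩
    rw [← zpow_natCast, ← zpow_mul, mul_comm, zpow_mul, zpow_natCast, ← hzp, pow_orderOf_eq_one,
      one_zpow]
  have := Subgroup.normal_of_le_center hZ
  have hlt : Nat.card (P ⧸ Z) < k := by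
    have hZcard : Nat.card Z = p := by rw [Nat.card_zpowers, hzp]
    rw [← hcard, Subgroup.card_eq_card_quotient_mul_card_subgroup Z, hZcard]
    exact lt_mul_of_one_lt_right Nat.card_pos hp.one_lt
  obtain ⟨n, hn⟩ := ih _ hlt (hP.to_quotient Z) rfl
  have hle : gammaP p P (n + 1) ≤ Z := by
    rw [← QuotientGroup.ker_mk' Z, ← Subgroup.map_eq_bot_iff,
      map_gammaP (QuotientGroup.mk'_surjective Z), hn]
  exact ⟨n + 1, pComm_top_eq_bot_iff.mpr ⟨hle.trans hZ, fun x hx => hZexp x (hle hx)⟩⟩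

open scoped IsMulCommutative in
theorem finite_isPGroup_of_le_center {p : ℕ} (hp : p ≠ 0) {Q : Type*} [Group Q]
    {C : Subgroup Q} [C.Normal] [Group.FG C] (hcen : C ≤ Subgroup.center Q)
    (hexp : ∀ c ∈ C, c ^ p = 1) [Finite (Q ⧸ C)] (hQ : IsPGroup p (Q ⧸ C)) :
    Finite Q ∧ IsPGroup p Q := by
  have : IsMulCommutative C :=
    .of_setLike_mul_comm fun a _ b hb => (Subgroup.mem_center_iff.mp (hcen hb) a)
  have : Finite C := CommGroup.finite_of_fg_isMulTorsion C fun c =>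
    isOfFinOrder_iff_pow_eq_one.mpr ⟨p, hp.bot_lt, Subtype.ext (hexp c c.2)⟩
  refine ⟨Finite.of_equiv _ (Subgroup.groupEquivQuotientProdSubgroup (s := C)).symm, fun x => ?_⟩
  obtain ⟨k, hk⟩ := hQ x
  rw [← QuotientGroup.mk_pow, QuotientGroup.eq_one_iff] at hk
  exact ⟨k + 1, by rw [pow_succ, pow_mul, hexp _ hk]⟩

theorem finite_isPGroup_quotient_pComm_top {p : ℕ} (hp : p ≠ 0) {G : Type*} [Group G]
    [Group.FG G] {N : Subgroup G} [hN : N.Normal] [Finite (G ⧸ N)] (hNp : IsPGroup p (G ⧸ N)) :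
    Finite (G ⧸ pComm p ⊤ N) ∧ IsPGroup p (G ⧸ pComm p ⊤ N) := by
  let π := QuotientGroup.mk' (pComm p ⊤ N)
  have hπ : Function.Surjective π := QuotientGroup.mk'_surjective _
  have hC : pComm p ⊤ (N.map π) = ⊥ := by
    rw [← map_pComm_top hπ, Subgroup.map_eq_bot_iff, QuotientGroup.ker_mk']
  obtain ⟨hcen, hexp⟩ := pComm_top_eq_bot_iff.mp hC
  have := Subgroup.normal_of_le_center hcen
  have := Subgroup.finiteIndex_of_finite_quotient (H := N)
  have : Group.FG (N.map π) := Group.fg_of_surjective (π.subgroupMap_surjective N)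
  let e := QuotientGroup.quotientQuotientEquivQuotient (pComm p ⊤ N) N (pComm_top_le_self hN)
  have : Finite (_ ⧸ N.map π) := Finite.of_equiv _ e.symm.toEquiv
  exact finite_isPGroup_of_le_center hp hcen hexp (hNp.of_equiv e.symm)

theorem finite_isPGroup_quotient_gammaP {p : ℕ} (hp : p ≠ 0) {G : Type*} [Group G]
    [Group.FG G] : ∀ n, Finite (G ⧸ gammaP p G n) ∧ IsPGroup p (G ⧸ gammaP p G n)
  | 0 | 1 => by
    have := QuotientGroup.subsingleton_quotient_top (G := G)
    exact ⟨inferInstanceAs (Finite (G ⧸ ⊤)), IsPGroup.of_subsingleton p (G ⧸ ⊤)⟩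
  | n + 2 => by
    obtain ⟨_, h⟩ := finite_isPGroup_quotient_gammaP (G := G) hp (n + 1)
    exact finite_isPGroup_quotient_pComm_top hp h

theorem isResiduallyP_of_forall_exists_quotient {p : ℕ} {G : Type*} [Group G]
    (h : ∀ g : G, g ≠ 1 → ∃ (N : Subgroup G) (_ : N.Normal),
      Finite (G ⧸ N) ∧ IsPGroup p (G ⧸ N) ∧ g ∉ N) :
    IsResiduallyP p G := by
  intro g hg
  obtain ⟨N, _, _, hN, hgN⟩ := h g hg
  let e : G ⧸ N ≃* Shrink.{0} (G ⧸ N) := Shrink.mulEquiv.symm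
  refine ⟨Shrink.{0} (G ⧸ N), inferInstance, .of_equiv _ e.toEquiv,
    e.toMonoidHom.comp (QuotientGroup.mk' N), hN.of_equiv e,
    e.surjective.comp (QuotientGroup.mk'_surjective N), ?_⟩
  simpa [QuotientGroup.eq_one_iff] using hgN

/-- **Proposition 2.3 (2).** A finitely generated group `G` is residually `p` if and only if
its lower `𝔽_p`-linear central filtration is separating. -/
theorem residuallyP_iff_gammaP_separating (p : ℕ) (hp : p.Prime) (G : Type*) [Group G]
    (hfg : Group.FG G) :
    IsResiduallyP p G ↔ (⨅ (n : ℕ) (_ : 1 ≤ n), gammaP p G n) = ⊥ := by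
  simp only [eq_bot_iff, SetLike.le_def, Subgroup.mem_iInf, Subgroup.mem_bot]
  constructor
  · intro hres g hg
    by_contra hg1
    obtain ⟨P, _, _, φ, hP, hφ, hφg⟩ := hres g hg1
    obtain ⟨n, hn⟩ := hP.exists_gammaP_eq_bot hp
    have hφg' : φ g ∈ gammaP p P (n + 1) :=
      map_gammaP hφ (n + 1) ▸ Subgroup.mem_map_of_mem φ (hg (n + 1) n.succ_pos)
    exact hφg (by rwa [hn] at hφg')
  · intro hsep
    refine isResiduallyP_of_forall_exists_quotient fun g hg => ?_
    obtain ⟨n, -, hgn⟩ : ∃ n, 1 ≤ n ∧ g ∉ gammaP p G n := by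
      by_contra! h
      exact hg (hsep h)
    obtain ⟨hfin, hpgroup⟩ := finite_isPGroup_quotient_gammaP (G := G) hp.ne_zero n
    exact ⟨gammaP p G n, inferInstance, hfin, hpgroup, hgn⟩
end

section
/- Let p be a prime, let G be a group, let n ≥ 1, and let A_n be the kernel of the natural homomorphism Aut(G) → Aut(G/γ_{n+1}^p G). Then for every k ≥ 1, every α ∈ A_n and every g ∈ γ_k^p G, one has g⁻¹α(g) ∈ γ_{n+k}^p G; that is, A_n acts trivially on γ_k^p G / γ_{n+k}^p G. -/
/-! Induction on `k`, for all `n` simultaneously. The elements `g` with `α g ≡ g` modulo a normal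
subgroup form a subgroup, so it suffices to check the generators `[a, h]` and `h ^ p`
(`h ∈ γ_k^p G`) of `γ_{k+1}^p G`. Write `α a = a u` and `α h = h v` with `u ∈ γ_{n+1}^p G` and,
by induction, `v ∈ γ_{n+k}^p G`. Modulo `γ_{n+k+1}^p G` the element `v` is central with `v ^ p = 1`,
and `u` commutes with everything in `γ_k^p G` (in particular with `h` and `[a, h]`) because
conjugation by `u` lies in `A_{n+1}`, to which the induction hypothesis applies. Hence
`[a u, h v] ≡ [a, h]` and `(h v) ^ p ≡ h ^ p`. -/

section Commutator

variable {G : Type*} [Group G]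

lemma commAB_eq_one_of_commute {a b : G} (h : Commute a b) : commAB a b = 1 := by
  rw [commAB, mul_assoc _ a, h.eq, ← mul_inv_rev, inv_mul_cancel]

lemma map_commAB {H F : Type*} [Group H] [FunLike F G H] [MonoidHomClass F G H] (f : F)
    (g h : G) : f (commAB g h) = commAB (f g) (f h) := by
  simp only [commAB, map_mul, map_inv]

lemma commAB_mul_left_of_commute {g h u : G} (huh : Commute u h)
    (hug : Commute u (commAB g h)) : commAB (g * u) h = commAB g h :=
  calc commAB (g * u) h = u⁻¹ * commAB g h * u * commAB u h := by simp only [commAB]; group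
    _ = commAB g h := by rw [hug.inv_mul_cancel, commAB_eq_one_of_commute huh, mul_one]

lemma commAB_mul_right_of_mem_center (x h : G) {v : G} (hv : v ∈ Subgroup.center G) :
    commAB x (h * v) = commAB x h :=
  have hcomm : ∀ g, Commute g v := Subgroup.mem_center_iff.1 hv
  calc commAB x (h * v) = (x⁻¹ * v⁻¹ * x) * commAB x h * v := by simp only [commAB]; group
    _ = commAB x h := by rw [(hcomm x).inv_right.inv_mul_cancel, (hcomm _).symm.inv_mul_cancel]

lemma QuotientGroup.mk_commAB {N : Subgroup G} [N.Normal] (a b : G) :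
    ((commAB a b : G) : G ⧸ N) = commAB (a : G ⧸ N) (b : G ⧸ N) := by
  simp only [commAB, QuotientGroup.mk_mul, QuotientGroup.mk_inv]

lemma QuotientGroup.commute_mk_of_commAB_mem {N : Subgroup G} [N.Normal] {a b : G}
    (h : commAB a b ∈ N) : Commute (a : G ⧸ N) (b : G ⧸ N) := by
  refine (QuotientGroup.eq.2 ?_).symm
  simpa [commAB, mul_assoc] using h

end Commutator

section LowerCentralFiltration

variable {p : ℕ} {G : Type*} [Group G]

lemma commAB_mem_gammaP_succ {m : ℕ} (x : G) {h : G} (hh : h ∈ gammaP p G m) :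
    commAB x h ∈ gammaP p G (m + 1) :=
  match m with
  | 0 => Subgroup.mem_top _
  | _ + 1 => Subgroup.subset_closure (Or.inl ⟨x, trivial, h, hh, rfl⟩)

lemma pow_mem_gammaP_succ {m : ℕ} {h : G} (hh : h ∈ gammaP p G m) :
    h ^ p ∈ gammaP p G (m + 1) :=
  match m with
  | 0 => Subgroup.mem_top _
  | _ + 1 => Subgroup.subset_closure (Or.inr ⟨h, hh, rfl⟩)

lemma gammaP_succ_le : ∀ m, gammaP p G (m + 1) ≤ gammaP p G m
  | 0 => le_top
  | m + 1 => by
    refine (Subgroup.closure_le _).2 ?_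
    rintro _ (⟨x, -, h, hh, rfl⟩ | ⟨h, hh, rfl⟩)
    · have hconj := (gammaP_normal p G _).conj_mem _ (inv_mem hh) x⁻¹
      rw [inv_inv] at hconj
      exact mul_mem hconj hh
    · exact pow_mem hh p

lemma mk_mem_center_of_mem_gammaP {m : ℕ} {v : G} (hv : v ∈ gammaP p G m) :
    (v : G ⧸ gammaP p G (m + 1)) ∈ Subgroup.center (G ⧸ gammaP p G (m + 1)) := by
  refine Subgroup.mem_center_iff.2 fun z => ?_
  induction z using QuotientGroup.induction_on with
  | H x => exact QuotientGroup.commute_mk_of_commAB_mem (commAB_mem_gammaP_succ x hv)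

lemma MulAut.conj_mem_An {n : ℕ} {u : G} (hu : u ∈ gammaP p G (n + 1)) :
    MulAut.conj u ∈ An p G (n + 1) := fun g => by
  simpa [commAB, mul_assoc] using commAB_mem_gammaP_succ g (inv_mem hu)

end LowerCentralFiltration

def AnActsTriviallyOnGammaP (p : ℕ) (G : Type*) [Group G] (k : ℕ) : Prop :=
  ∀ n, ∀ α ∈ An p G n, ∀ g ∈ gammaP p G (k + 1), g⁻¹ * α g ∈ gammaP p G (n + k + 1)

namespace AnActsTriviallyOnGammaP

variable {p : ℕ} {G : Type*} [Group G] {k : ℕ}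

lemma zero : AnActsTriviallyOnGammaP p G 0 := fun _ _ hα g _ => hα g

lemma commute_mk (hk : AnActsTriviallyOnGammaP p G k) {n : ℕ} {u x : G}
    (hu : u ∈ gammaP p G (n + 1)) (hx : x ∈ gammaP p G (k + 1)) :
    Commute (u : G ⧸ gammaP p G (n + k + 2)) x := by
  have hconj := hk (n + 1) _ (MulAut.conj_mem_An (inv_mem hu)) x hx
  rw [show n + 1 + k + 1 = n + k + 2 by omega] at hconj
  refine (QuotientGroup.commute_mk_of_commAB_mem ?_).symm
  simpa [commAB, mul_assoc] using hconj

variable {n : ℕ} {α : MulAut G}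

lemma mk_apply_commAB (hk : AnActsTriviallyOnGammaP p G k) (hα : α ∈ An p G n) (a : G) {h : G}
    (hh : h ∈ gammaP p G (k + 1)) :
    (α (commAB a h) : G ⧸ gammaP p G (n + k + 2)) = commAB a h := by
  obtain ⟨u, hu, hαa⟩ : ∃ u ∈ gammaP p G (n + 1), α a = a * u :=
    ⟨_, hα a, (mul_inv_cancel_left a _).symm⟩
  obtain ⟨v, hv, hαh⟩ : ∃ v ∈ gammaP p G (n + k + 1), α h = h * v :=
    ⟨_, hk n α hα h hh, (mul_inv_cancel_left h _).symm⟩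
  have hah : commAB a h ∈ gammaP p G (k + 1) :=
    gammaP_succ_le _ (commAB_mem_gammaP_succ a hh)
  rw [map_commAB, hαa, hαh, QuotientGroup.mk_commAB, QuotientGroup.mk_commAB,
    QuotientGroup.mk_mul, QuotientGroup.mk_mul,
    commAB_mul_right_of_mem_center _ _ (mk_mem_center_of_mem_gammaP hv),
    commAB_mul_left_of_commute (hk.commute_mk hu hh)
      (by simpa only [QuotientGroup.mk_commAB] using hk.commute_mk hu hah)]

lemma mk_apply_pow (hk : AnActsTriviallyOnGammaP p G k) (hα : α ∈ An p G n) {h : G}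
    (hh : h ∈ gammaP p G (k + 1)) :
    (α (h ^ p) : G ⧸ gammaP p G (n + k + 2)) = h ^ p := by
  obtain ⟨v, hv, hαh⟩ : ∃ v ∈ gammaP p G (n + k + 1), α h = h * v :=
    ⟨_, hk n α hα h hh, (mul_inv_cancel_left h _).symm⟩
  have hcomm : Commute (h : G ⧸ gammaP p G (n + k + 2)) v :=
    Subgroup.mem_center_iff.1 (mk_mem_center_of_mem_gammaP hv) _
  have hvp : (v : G ⧸ gammaP p G (n + k + 2)) ^ p = 1 := by
    rw [← QuotientGroup.mk_pow, QuotientGroup.eq_one_iff]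
    exact pow_mem_gammaP_succ hv
  rw [map_pow, hαh, QuotientGroup.mk_pow, QuotientGroup.mk_mul, hcomm.mul_pow, hvp, mul_one]

lemma succ (hk : AnActsTriviallyOnGammaP p G k) : AnActsTriviallyOnGammaP p G (k + 1) := by
  intro n α hα
  let π := QuotientGroup.mk' (gammaP p G (n + k + 2))
  suffices Set.EqOn (π.comp α.toMonoidHom) π (gammaP p G (k + 2)) from
    fun g hg => QuotientGroup.eq.1 (this hg).symm
  refine MonoidHom.eqOn_closure ?_
  rintro _ (⟨a, -, h, hh, rfl⟩ | ⟨h, hh, rfl⟩)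
  exacts [hk.mk_apply_commAB hα a hh, hk.mk_apply_pow hα hh]

end AnActsTriviallyOnGammaP

lemma anActsTriviallyOnGammaP (p : ℕ) (G : Type*) [Group G] :
    ∀ k, AnActsTriviallyOnGammaP p G k
  | 0 => .zero
  | k + 1 => (anActsTriviallyOnGammaP p G k).succ

theorem An_acts_trivially_general (p : ℕ) (G : Type*) [Group G] (n : ℕ)
    (α : MulAut G) (hα : α ∈ An p G n) (k : ℕ) (hk : 1 ≤ k)
    (g : G) (hg : g ∈ gammaP p G k) :
    g⁻¹ * α g ∈ gammaP p G (n + k) := by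
  obtain ⟨k, rfl⟩ := Nat.exists_eq_add_of_le' hk
  exact anActsTriviallyOnGammaP p G k n α hα g hg

/-- **Claim 1 in the proof of Theorem 2.4.** `A_n` acts trivially on `γ_k^p G / γ_{n+k}^p G`
for all `k ≥ 1`. -/
theorem An_acts_trivially (p : ℕ) (hp : p.Prime) (G : Type*) [Group G] (n : ℕ) (hn : 1 ≤ n)
    (α : MulAut G) (hα : α ∈ An p G n) (k : ℕ) (hk : 1 ≤ k)
    (g : G) (hg : g ∈ gammaP p G k) :
    g⁻¹ * α g ∈ gammaP p G (n + k) :=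
  An_acts_trivially_general p G n α hα k hk g hg
end

section
/- Let p be a prime, let G be a group, let n ≥ 1, and let A_n be the kernel of the natural homomorphism Aut(G) → Aut(G/γ_{n+1}^p G). For α ∈ A_n, the map u_α : G/γ_{n+1}^p G → γ_{n+1}^p G/γ_{n+2}^p G sending the class of g to the class of g⁻¹α(g) is well-defined; moreover, the map u : A_n → H_n, α ↦ u_α, into the group H_n of set-maps from G/γ_{n+1}^p G to γ_{n+1}^p G/γ_{n+2}^p G (with pointwise multiplication) is a group homomorphism whose kernel is A_{n+1}. -/
section ParisAux

variable {p : ℕ} {G : Type*} [Group G] {n : ℕ}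

private lemma comm_mem_pComm' (g : G) {H : Subgroup G} {x : G} (hx : x ∈ H) :
    commAB g x ∈ pComm p ⊤ H :=
  Subgroup.subset_closure (Or.inl ⟨g, trivial, x, hx, rfl⟩)

private lemma pow_mem_pComm' {H : Subgroup G} {x : G} (hx : x ∈ H) : x ^ p ∈ pComm p ⊤ H :=
  Subgroup.subset_closure (Or.inr ⟨x, hx, rfl⟩)

private lemma gammaP_add_two (m : ℕ) :
    gammaP p G (m + 2) = pComm p ⊤ (gammaP p G (m + 1)) := rfl

private lemma comm_eq_one {Q : Type*} [Group Q] {a b : Q} (c : a * b = b * a) :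
    a⁻¹ * b⁻¹ * a * b = 1 := by
  have e : a⁻¹ * b⁻¹ * a * b = (b * a)⁻¹ * (a * b) := by group
  rw [e, c]
  group

private lemma mk_comm {x : G} (hx : x ∈ gammaP p G (n + 1)) (g : G) :
    (QuotientGroup.mk g : G ⧸ gammaP p G (n + 2)) * QuotientGroup.mk x =
      QuotientGroup.mk x * QuotientGroup.mk g := by
  rw [← QuotientGroup.mk_mul, ← QuotientGroup.mk_mul, QuotientGroup.eq]
  have h1 : commAB g x ∈ gammaP p G (n + 2) := by
    rw [gammaP_add_two]; exact comm_mem_pComm' g hx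
  have e : (g * x)⁻¹ * (x * g) = (commAB g x)⁻¹ := by
    simp only [commAB]; group
  rw [e]
  exact Subgroup.inv_mem _ h1

/-- The auxiliary homomorphism `g ↦ [g⁻¹ α(g)]` into `G ⧸ γ_{n+2}^p G`. -/
private def fA (α : MulAut G) (hα : ∀ g : G, g⁻¹ * α g ∈ gammaP p G (n + 1)) :
    G →* G ⧸ gammaP p G (n + 2) where
  toFun g := QuotientGroup.mk (g⁻¹ * α g)
  map_one' := by simp
  map_mul' g h := by
    show (QuotientGroup.mk ((g * h)⁻¹ * α (g * h)) : G ⧸ gammaP p G (n + 2)) =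
      QuotientGroup.mk (g⁻¹ * α g) * QuotientGroup.mk (h⁻¹ * α h)
    rw [← QuotientGroup.mk_mul, QuotientGroup.eq]
    have h1 : commAB h (g⁻¹ * α g) ∈ gammaP p G (n + 2) := by
      rw [gammaP_add_two]; exact comm_mem_pComm' h (hα g)
    have e : ((g * h)⁻¹ * α (g * h))⁻¹ * ((g⁻¹ * α g) * (h⁻¹ * α h)) =
        (h⁻¹ * α h)⁻¹ * commAB h (g⁻¹ * α g) * ((h⁻¹ * α h)⁻¹)⁻¹ := by
      simp only [commAB, map_mul]; group
    rw [e]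
    exact (gammaP_normal p G (n + 2)).conj_mem _ h1 _

private lemma fA_apply (α : MulAut G) (hα : ∀ g : G, g⁻¹ * α g ∈ gammaP p G (n + 1)) (g : G) :
    fA α hα g = QuotientGroup.mk (g⁻¹ * α g) := rfl

private lemma fA_ker (hn : 1 ≤ n) (α : MulAut G)
    (hα : ∀ g : G, g⁻¹ * α g ∈ gammaP p G (n + 1)) {x : G}
    (hx : x ∈ gammaP p G (n + 1)) : fA α hα x = 1 := by
  obtain ⟨m, rfl⟩ : ∃ m, n = m + 1 := ⟨n - 1, (Nat.succ_pred_eq_of_pos hn).symm⟩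
  have hx' : x ∈ pComm p ⊤ (gammaP p G (m + 1)) := hx
  unfold pComm at hx'
  clear hx
  induction hx' using Subgroup.closure_induction with
  | mem y hy =>
    rcases hy with ⟨g, -, w, hw, rfl⟩ | ⟨w, hw, rfl⟩
    · have e : fA α hα (commAB g w) =
          (fA α hα g)⁻¹ * (fA α hα w)⁻¹ * fA α hα g * fA α hα w := by
        simp only [commAB, map_mul, map_inv]
      rw [e]
      have c : fA α hα g * fA α hα w = fA α hα w * fA α hα g := by
        rw [fA_apply, fA_apply]
        exact mk_comm (hα w) (g⁻¹ * α g)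
      exact comm_eq_one c
    · have e : fA α hα (w ^ p) = QuotientGroup.mk ((w⁻¹ * α w) ^ p) := by
        rw [map_pow, fA_apply, ← QuotientGroup.mk_pow]
      rw [e, QuotientGroup.eq_one_iff]
      rw [gammaP_add_two]
      exact pow_mem_pComm' (hα w)
  | one => simp
  | mul a b ha hb iha ihb => rw [map_mul, iha, ihb, mul_one]
  | inv a ha iha => rw [map_inv, iha, inv_one]

private lemma fA_const (hn : 1 ≤ n) (α : MulAut G)
    (hα : ∀ g : G, g⁻¹ * α g ∈ gammaP p G (n + 1)) {a b : G}
    (hab : a⁻¹ * b ∈ gammaP p G (n + 1)) : fA α hα a = fA α hα b := by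
  conv_rhs => rw [← mul_inv_cancel_left a b]
  rw [map_mul, fA_ker hn α hα hab, mul_one]

end ParisAux

/-- **Claims 3 and 4 in the proof of Theorem 2.4.** For `α ∈ A_n`, the map
`u_α : G/γ_{n+1}^p G → γ_{n+1}^p G/γ_{n+2}^p G`, `[g] ↦ [g⁻¹α(g)]`, is well defined, and
`α ↦ u_α` is a homomorphism from `A_n` to the group of set-maps
`G/γ_{n+1}^p G → γ_{n+1}^p G/γ_{n+2}^p G` (with pointwise multiplication) whose kernel
is `A_{n+1}`. -/
theorem An_to_maps_hom (p : ℕ) (hp : p.Prime) (G : Type*) [Group G] (n : ℕ) (hn : 1 ≤ n) :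
    ∃ u : An p G n →* ((G ⧸ gammaP p G (n + 1)) →
        (↥(gammaP p G (n + 1)) ⧸ (gammaP p G (n + 2)).subgroupOf (gammaP p G (n + 1)))),
      (∀ (α : An p G n) (g : G),
        u α (QuotientGroup.mk g) =
          QuotientGroup.mk ⟨g⁻¹ * (α : MulAut G) g, mem_An.mp α.2 g⟩) ∧
      ∀ α : An p G n, u α = 1 ↔ (α : MulAut G) ∈ An p G (n + 1) := by
  have hval : ∀ (α : MulAut G) (hα : ∀ g : G, g⁻¹ * α g ∈ gammaP p G (n + 1)) (a b : G),
      a⁻¹ * b ∈ gammaP p G (n + 1) →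
      (QuotientGroup.mk (a⁻¹ * α a) : G ⧸ gammaP p G (n + 2)) =
        QuotientGroup.mk (b⁻¹ * α b) := by
    intro α hα a b hab
    have h := fA_const hn α hα hab
    rwa [fA_apply, fA_apply] at h
  have sqeq : ∀ {x y : G} (hx : x ∈ gammaP p G (n + 1)) (hy : y ∈ gammaP p G (n + 1)),
      ((QuotientGroup.mk ⟨x, hx⟩ :
          ↥(gammaP p G (n + 1)) ⧸ (gammaP p G (n + 2)).subgroupOf (gammaP p G (n + 1))) =
        QuotientGroup.mk ⟨y, hy⟩) ↔
        (QuotientGroup.mk x : G ⧸ gammaP p G (n + 2)) = QuotientGroup.mk y := by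
    intro x y hx hy
    rw [QuotientGroup.eq, QuotientGroup.eq]
    simp [Subgroup.mem_subgroupOf]
  have sqone : ∀ {x : G} (hx : x ∈ gammaP p G (n + 1)),
      ((QuotientGroup.mk ⟨x, hx⟩ :
          ↥(gammaP p G (n + 1)) ⧸ (gammaP p G (n + 2)).subgroupOf (gammaP p G (n + 1))) = 1) ↔
        x ∈ gammaP p G (n + 2) := by
    intro x hx
    rw [QuotientGroup.eq_one_iff]
    exact Subgroup.mem_subgroupOf
  refine ⟨MonoidHom.mk' (fun α => fun q => Quotient.liftOn' q
      (fun g => QuotientGroup.mk ⟨g⁻¹ * (α : MulAut G) g, mem_An.mp α.2 g⟩)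
      (fun a b hab => by
        refine (sqeq _ _).mpr ?_
        exact hval _ (fun g => mem_An.mp α.2 g) a b (QuotientGroup.leftRel_apply.mp hab)))
    ?_, fun α g => rfl, fun α => ?_⟩
  · intro α β
    funext q
    refine QuotientGroup.induction_on q ?_
    intro g
    have hα := fun g => mem_An.mp α.2 g
    have hβ := fun g => mem_An.mp β.2 g
    have hβ' : ((β : MulAut G) g)⁻¹ * g ∈ gammaP p G (n + 1) := by
      have := Subgroup.inv_mem _ (hβ g)
      rwa [mul_inv_rev, inv_inv] at this
    show (QuotientGroup.mk ⟨g⁻¹ * ((α * β : An p G n) : MulAut G) g, _⟩ :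
        ↥(gammaP p G (n + 1)) ⧸ (gammaP p G (n + 2)).subgroupOf (gammaP p G (n + 1))) =
      QuotientGroup.mk ⟨g⁻¹ * (α : MulAut G) g, _⟩ * QuotientGroup.mk ⟨g⁻¹ * (β : MulAut G) g, _⟩
    rw [← QuotientGroup.mk_mul]
    refine (sqeq _ _).mpr ?_
    have step1 : (QuotientGroup.mk (g⁻¹ * (α : MulAut G) ((β : MulAut G) g)) :
        G ⧸ gammaP p G (n + 2)) =
        QuotientGroup.mk ((g⁻¹ * (β : MulAut G) g) * (((β : MulAut G) g)⁻¹ *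
          (α : MulAut G) ((β : MulAut G) g))) := by
      congr 1
      group
    have step2 : (QuotientGroup.mk (((β : MulAut G) g)⁻¹ * (α : MulAut G) ((β : MulAut G) g)) :
        G ⧸ gammaP p G (n + 2)) = QuotientGroup.mk (g⁻¹ * (α : MulAut G) g) :=
      hval _ hα _ _ hβ'
    calc (QuotientGroup.mk (g⁻¹ * ((α * β : An p G n) : MulAut G) g) :
          G ⧸ gammaP p G (n + 2))
        = QuotientGroup.mk ((g⁻¹ * (β : MulAut G) g) * (((β : MulAut G) g)⁻¹ *
            (α : MulAut G) ((β : MulAut G) g))) := step1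
      _ = QuotientGroup.mk (g⁻¹ * (β : MulAut G) g) *
            QuotientGroup.mk (((β : MulAut G) g)⁻¹ * (α : MulAut G) ((β : MulAut G) g)) := by
          rw [QuotientGroup.mk_mul]
      _ = QuotientGroup.mk (g⁻¹ * (β : MulAut G) g) *
            QuotientGroup.mk (g⁻¹ * (α : MulAut G) g) := by rw [step2]
      _ = QuotientGroup.mk (g⁻¹ * (α : MulAut G) g) *
            QuotientGroup.mk (g⁻¹ * (β : MulAut G) g) := mk_comm (hα g) _
      _ = QuotientGroup.mk ((g⁻¹ * (α : MulAut G) g) * (g⁻¹ * (β : MulAut G) g)) := by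
          rw [← QuotientGroup.mk_mul]
  · constructor
    · intro h
      rw [mem_An]
      intro g
      have hg := congrFun h (QuotientGroup.mk g : G ⧸ gammaP p G (n + 1))
      rw [Pi.one_apply] at hg
      exact (sqone (mem_An.mp α.2 g)).mp hg
    · intro h
      funext q
      refine QuotientGroup.induction_on q ?_
      intro g
      rw [Pi.one_apply]
      exact (sqone (mem_An.mp α.2 g)).mpr (mem_An.mp h g)
end

section
/- Let p be a prime, let P be a finite p-group, let e ≥ 0, and let ξ, ω ∈ P be such that [ω^{p^r}, ξ ω^{p^r} ξ⁻¹] ≠ 1 for all 0 ≤ r ≤ e. If a, b are integers with ω^a = ξ ω^b ξ⁻¹, then p^{e+1} divides both a and b. -/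
private lemma commAB_eq_one_of_commute_s19 {G : Type*} [Group G] {g h : G}
    (hc : Commute g h) : commAB g h = 1 := by
  unfold commAB
  rw [mul_assoc, mul_assoc, hc.eq]
  group

private lemma p_dvd_aux (p : ℕ) (hp : p.Prime) {P : Type*} [Group P]
    (hP : IsPGroup p P) (ξ ω : P)
    (h0 : commAB ω (ξ * ω * ξ⁻¹) ≠ 1) (a b : ℤ) (hab : ω ^ a = ξ * ω ^ b * ξ⁻¹) :
    (p : ℤ) ∣ a ∧ (p : ℤ) ∣ b := by
  obtain ⟨k, hk⟩ := hP ω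
  have hkz : ω ^ ((p : ℤ) ^ k) = 1 := by
    rw [show ((p:ℤ)^k) = ((p^k : ℕ) : ℤ) by push_cast; ring, zpow_natCast, hk]
  have key : ∀ c : ℤ, ¬ (p : ℤ) ∣ c → ∃ u : ℤ, ω ^ (c * u) = ω := by
    intro c hc
    have hpp : Prime (p : ℤ) := Nat.prime_iff_prime_int.mp hp
    have hcop : IsCoprime ((p : ℤ) ^ k) c :=
      (hpp.coprime_iff_not_dvd.mpr hc).pow_left
    obtain ⟨v, u, huv⟩ := hcop
    refine ⟨u, ?_⟩
    have hcu : c * u = 1 - v * (p : ℤ) ^ k := by linarith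
    rw [hcu, zpow_sub, zpow_one, mul_comm v, zpow_mul, hkz, one_zpow, inv_one, mul_one]
  have hb : (p : ℤ) ∣ b := by
    by_contra hb
    obtain ⟨u, hu⟩ := key b hb
    apply h0
    apply commAB_eq_one_of_commute_s19
    have hcj : ξ * ω * ξ⁻¹ = ω ^ (a * u) := by
      calc ξ * ω * ξ⁻¹ = ξ * ω ^ (b * u) * ξ⁻¹ := by rw [hu]
        _ = (ξ * ω ^ b * ξ⁻¹) ^ u := by rw [conj_zpow, zpow_mul]
        _ = (ω ^ a) ^ u := by rw [hab]
        _ = ω ^ (a * u) := (zpow_mul ω a u).symm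
    rw [hcj]
    exact (Commute.refl ω).zpow_right _
  refine ⟨?_, hb⟩
  by_contra ha
  obtain ⟨u, hu⟩ := key a ha
  apply h0
  apply commAB_eq_one_of_commute_s19
  have h1 : ω = ξ * ω ^ (b * u) * ξ⁻¹ := by
    calc ω = ω ^ (a * u) := hu.symm
      _ = (ω ^ a) ^ u := zpow_mul ω a u
      _ = (ξ * ω ^ b * ξ⁻¹) ^ u := by rw [hab]
      _ = ξ * ω ^ (b * u) * ξ⁻¹ := by rw [conj_zpow, zpow_mul]
  have h2 : ξ⁻¹ * ω * ξ = ω ^ (b * u) := by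
    conv_lhs => rw [h1]
    group
  have h3 : Commute (ξ⁻¹ * ω * ξ) ω := h2 ▸ (Commute.refl ω).zpow_left _
  have h4 := h3.map (MulAut.conj ξ)
  simpa [MulAut.conj_apply, mul_assoc] using h4

private lemma main_aux (p : ℕ) (hp : p.Prime) {P : Type*} [Group P]
    (hP : IsPGroup p P) :
    ∀ (e : ℕ) (ξ ω : P) (a b : ℤ),
      (∀ r : ℕ, r ≤ e → commAB (ω ^ p ^ r) (ξ * ω ^ p ^ r * ξ⁻¹) ≠ 1) →
      ω ^ a = ξ * ω ^ b * ξ⁻¹ → (p : ℤ) ^ (e + 1) ∣ a ∧ (p : ℤ) ^ (e + 1) ∣ b := by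
  intro e
  induction e with
  | zero =>
    intro ξ ω a b h hab
    have h0 : commAB ω (ξ * ω * ξ⁻¹) ≠ 1 := by simpa using h 0 le_rfl
    simpa using p_dvd_aux p hp hP ξ ω h0 a b hab
  | succ e ih =>
    intro ξ ω a b h hab
    have h0 : commAB ω (ξ * ω * ξ⁻¹) ≠ 1 := by simpa using h 0 (by omega)
    obtain ⟨ha, hb⟩ := p_dvd_aux p hp hP ξ ω h0 a b hab
    obtain ⟨a', rfl⟩ := ha
    obtain ⟨b', rfl⟩ := hb
    have hab' : (ω ^ p) ^ a' = ξ * (ω ^ p) ^ b' * ξ⁻¹ := by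
      rw [← zpow_natCast ω p, ← zpow_mul, ← zpow_mul]
      exact hab
    have h' : ∀ r : ℕ, r ≤ e →
        commAB ((ω ^ p) ^ p ^ r) (ξ * (ω ^ p) ^ p ^ r * ξ⁻¹) ≠ 1 := by
      intro r hr
      rw [← pow_mul, ← pow_succ']
      exact h (r + 1) (by omega)
    obtain ⟨ha', hb'⟩ := ih ξ (ω ^ p) a' b' h' hab'
    constructor
    · rw [pow_succ']
      exact mul_dvd_mul_left _ ha'
    · rw [pow_succ']
      exact mul_dvd_mul_left _ hb'

/-- **Lemma 4.9 / Corollary 4.10.** In a finite `p`-group `P`: if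
`[ω^{p^r}, ξω^{p^r}ξ⁻¹] ≠ 1` for all `0 ≤ r ≤ e` and `ω^a = ξω^bξ⁻¹`, then `p^{e+1}`
divides both `a` and `b`. -/
theorem pPow_dvd_of_conj_zpow_eq (p : ℕ) (hp : p.Prime) (P : Type*) [Group P]
    (hfin : Finite P) (hP : IsPGroup p P) (e : ℕ) (ξ ω : P)
    (h : ∀ r : ℕ, r ≤ e → commAB (ω ^ p ^ r) (ξ * ω ^ p ^ r * ξ⁻¹) ≠ 1)
    (a b : ℤ) (hab : ω ^ a = ξ * ω ^ b * ξ⁻¹) :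
    (p : ℤ) ^ (e + 1) ∣ a ∧ (p : ℤ) ^ (e + 1) ∣ b :=
  main_aux p hp hP e ξ ω a b h hab
end
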